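/- Let G be a Tanner graph with a rooted tree decomposition, and let t be a join node with children t1 and t2 (B_t = B_{t1} = B_{t2}). If S is a trapping set with parameters (R',∅) in G_{t1} (respectively in G_{t2}), then S is a trapping set with parameters (R',∅) in G_t. -/

import Mathlib

/-!
A trapping set `S` with `Q = ∅` avoids the bag `B t1`. Since the bags containing a vertex
form a subtree, every bag containing a vertex of `S` lies below `t1`; hence every check node
adjacent to `S` already belongs to `G_{t1}`, the odd-degree check nodes of `S` are the same in
`G_{t1}` and in `G_t`, and `B t = B t1` keeps `Q = ∅`.
-/

/-- A Tanner graph: a bipartite graph on vertex set `V` partitioned into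
variable nodes `L` and check nodes `R`, every edge joining `L` and `R`. -/
structure TannerGraph (V : Type*) where
  G : SimpleGraph V
  L : Set V
  R : Set V
  disj : Disjoint L R
  cover : L ∪ R = Set.univ
  bipartite : ∀ ⦃u v⦄, G.Adj u v → (u ∈ L ∧ v ∈ R) ∨ (u ∈ R ∧ v ∈ L)

/-- `Γ_o(G[S])`: check nodes having an odd number of neighbours in `S`. -/
def TannerGraph.Gamma {V : Type*} (TG : TannerGraph V) (S : Set V) : Set V :=
  {c | c ∈ TG.R ∧ Odd ((TG.G.neighborSet c ∩ S).ncard)}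

/-- A rooted tree decomposition of the graph `G`: `T` is a finite tree with
root `root` and bags `B i ⊆ V` covering all vertices and edges, such that for
every vertex the set of bags containing it induces a connected subgraph of `T`. -/
structure IsRootedTreeDecomp {V ι : Type*} (G : SimpleGraph V)
    (T : SimpleGraph ι) (root : ι) (B : ι → Set V) : Prop where
  isTree : T.IsTree
  covers : ∀ v, ∃ i, v ∈ B i
  coversEdge : ∀ ⦃u v⦄, G.Adj u v → ∃ i, u ∈ B i ∧ v ∈ B i
  connBags : ∀ v, (T.induce {i | v ∈ B i}).Connected

/-- `Desc T root t i`: `i` is a descendant of `t` in the tree `T` rooted at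
`root`, i.e. `t` lies on a path from the root to `i` (`t` itself included). -/
def Desc {ι : Type*} (T : SimpleGraph ι) (root : ι) (t i : ι) : Prop :=
  ∃ p : T.Walk root i, p.IsPath ∧ t ∈ p.support

/-- `IsChildOf T root s t`: `s` is a child of `t` in the rooted tree. -/
def IsChildOf {ι : Type*} (T : SimpleGraph ι) (root : ι) (s t : ι) : Prop :=
  T.Adj t s ∧ Desc T root t s

/-- `∪_{i ∈ T_t} B_i`: union of the bags over all descendants of `t`;
this is the vertex set of the induced subgraph `G_t`. -/
def subVerts {V ι : Type*} (T : SimpleGraph ι) (root : ι) (B : ι → Set V)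
    (t : ι) : Set V :=
  {v | ∃ i, Desc T root t i ∧ v ∈ B i}

/-- `Γ_o(G_t[S])`, where `W` is the vertex set of `G_t`: check nodes of `G_t`
having an odd number of `G_t`-neighbours in `S`. -/
def GammaLoc {V : Type*} (TG : TannerGraph V) (W S : Set V) : Set V :=
  {c | c ∈ TG.R ∧ c ∈ W ∧ Odd ((TG.G.neighborSet c ∩ W ∩ S).ncard)}

/-- `S` is a trapping set with parameters `(R', Q)` in `G_t`, where `W` is the
vertex set of `G_t` and `Bt` is the bag at `t`. -/
def HasParams {V : Type*} (TG : TannerGraph V) (W Bt S R' Q : Set V) : Prop :=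
  S.Nonempty ∧ S ⊆ W ∩ TG.L ∧ S ∩ (Bt ∩ TG.L) = Q ∧ GammaLoc TG W S = R'

/-- `S` is a trapping set with extended parameters `(I, Q, d)` in `G_t`. -/
def HasExtParams {V : Type*} (TG : TannerGraph V) (W Bt S I Q : Set V)
    (d : ℕ) : Prop :=
  S.Nonempty ∧ S ⊆ W ∩ TG.L ∧ S ∩ (Bt ∩ TG.L) = Q ∧
    GammaLoc TG W S ∩ (Bt ∩ TG.R) = I ∧ (GammaLoc TG W S \ (Bt ∩ TG.R)).ncard = d

/-- `Γ_o(G_t[Q ∪ B_t^c]) = {c ∈ B_t^c : |N_{G_t}(c) ∩ Q| is odd}`. -/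
def GammaBag {V : Type*} (TG : TannerGraph V) (W Bt Q : Set V) : Set V :=
  {c | c ∈ Bt ∩ TG.R ∧ Odd ((TG.G.neighborSet c ∩ W ∩ Q).ncard)}

open SimpleGraph

section Desc

variable {ι : Type*} {T : SimpleGraph ι} {root : ι}

lemma Desc.mem_support (hT : T.IsTree) {t i : ι} (h : Desc T root t i)
    {p : T.Walk root i} (hp : p.IsPath) : t ∈ p.support := by
  obtain ⟨q, hq, ht⟩ := h
  rwa [(hT.existsUnique_path root i).unique hp hq]

lemma Desc.trans (hT : T.IsTree) {t s i : ι} (hts : Desc T root t s)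
    (hsi : Desc T root s i) : Desc T root t i := by
  classical
  obtain ⟨p, hp, hs⟩ := hsi
  exact ⟨p, hp, p.support_takeUntil_subset_support hs
    (hts.mem_support hT (hp.takeUntil hs))⟩

lemma Desc.eq_of_adj (hT : T.IsTree) {t a b : ι} (hab : T.Adj a b)
    (hb : Desc T root t b) (ha : ¬ Desc T root t a) : b = t := by
  classical
  obtain ⟨p, hp⟩ := (hT.connected.preconnected root a).some.toPath
  have ht : t ∉ p.support := fun h => ha ⟨p, hp, h⟩
  by_cases hbp : b ∈ p.support
  · exact absurd (p.support_takeUntil_subset_support hbp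
      (hb.mem_support hT (hp.takeUntil hbp))) ht
  · have hpath : (p.concat hab).IsPath := by
      rw [← Walk.isPath_reverse_iff, Walk.reverse_concat]
      exact hp.reverse.cons (by rwa [Walk.support_reverse, List.mem_reverse])
    have := hb.mem_support hT hpath
    rw [Walk.support_concat, List.mem_append, List.mem_singleton] at this
    exact (this.resolve_left ht).symm

end Desc

section TreeDecomp

variable {V ι : Type*} {G : SimpleGraph V} {T : SimpleGraph ι} {root : ι}
  {B : ι → Set V}

lemma subVerts_mono (hT : T.IsTree) {t s : ι} (hts : Desc T root t s) :
    subVerts T root B s ⊆ subVerts T root B t :=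
  fun _ ⟨i, hsi, hvi⟩ => ⟨i, hts.trans hT hsi, hvi⟩

/-- A tree edge leaving `T_s` has `s` as its inner end, so the connected set of bags
containing `v` cannot leave `T_s`. -/
lemma desc_of_mem_bag (hD : IsRootedTreeDecomp G T root B) {s j i : ι} {v : V}
    (hvs : v ∉ B s) (hsj : Desc T root s j) (hvj : v ∈ B j) (hvi : v ∈ B i) :
    Desc T root s i := by
  by_contra hsi
  obtain ⟨w⟩ := (hD.connBags v).preconnected ⟨j, hvj⟩ ⟨i, hvi⟩
  obtain ⟨d, -, hd, hd'⟩ :=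
    w.exists_boundary_dart {a | Desc T root s a.val} hsj hsi
  have hds : d.fst.val = s := Desc.eq_of_adj hD.isTree d.adj.symm hd hd'
  exact hvs (hds ▸ d.fst.prop)

lemma mem_subVerts_of_adj (hD : IsRootedTreeDecomp G T root B) {s : ι} {v c : V}
    (hv : v ∈ subVerts T root B s) (hvs : v ∉ B s) (hvc : G.Adj v c) :
    c ∈ subVerts T root B s := by
  obtain ⟨j, hsj, hvj⟩ := hv
  obtain ⟨i, hvi, hci⟩ := hD.coversEdge hvc
  exact ⟨i, desc_of_mem_bag hD hvs hsj hvj hvi, hci⟩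

end TreeDecomp

lemma gammaLoc_eq_of_subset {V : Type*} (TG : TannerGraph V) {W W' S : Set V}
    (hSW : S ⊆ W) (hWW' : W ⊆ W')
    (hadj : ∀ ⦃v c⦄, v ∈ S → TG.G.Adj v c → c ∈ W) :
    GammaLoc TG W' S = GammaLoc TG W S := by
  have hN : ∀ c (U : Set V), S ⊆ U →
      TG.G.neighborSet c ∩ U ∩ S = TG.G.neighborSet c ∩ S := fun c U hSU => by
    rw [Set.inter_assoc, Set.inter_eq_right.mpr hSU]
  ext c
  simp only [GammaLoc, Set.mem_ofPred_eq, hN c W hSW, hN c W' (hSW.trans hWW')]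
  refine ⟨fun ⟨hR, _, hodd⟩ => ⟨hR, ?_, hodd⟩, fun ⟨hR, hW, hodd⟩ => ⟨hR, hWW' hW, hodd⟩⟩
  obtain ⟨v, hcv, hvS⟩ : (TG.G.neighborSet c ∩ S).Nonempty :=
    Set.nonempty_of_ncard_ne_zero fun h => by simp [h] at hodd
  exact hadj hvS (TG.G.adj_symm hcv)

lemma HasParams.of_desc {V ι : Type*} {TG : TannerGraph V} {T : SimpleGraph ι}
    {root : ι} {B : ι → Set V} (hD : IsRootedTreeDecomp TG.G T root B) {t s : ι}
    (hts : Desc T root t s) (hB : B t = B s) {S R' : Set V}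
    (h : HasParams TG (subVerts T root B s) (B s) S R' ∅) :
    HasParams TG (subVerts T root B t) (B t) S R' ∅ := by
  obtain ⟨hne, hsub, hQ, hG⟩ := h
  have hmono := subVerts_mono (B := B) hD.isTree hts
  have hSB : ∀ v ∈ S, v ∉ B s := fun v hv hvB =>
    (hQ ▸ ⟨hv, hvB, (hsub hv).2⟩ : v ∈ (∅ : Set V))
  refine ⟨hne, fun v hv => ⟨hmono (hsub hv).1, (hsub hv).2⟩, hB ▸ hQ, ?_⟩
  rw [gammaLoc_eq_of_subset TG (fun v hv => (hsub hv).1) hmono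
    fun v c hv hvc => mem_subVerts_of_adj hD (hsub hv).1 (hSB v hv) hvc, hG]

theorem stmt_17_general {V ι : Type*}
    (TG : TannerGraph V) (T : SimpleGraph ι) (root : ι) (B : ι → Set V)
    (hD : IsRootedTreeDecomp TG.G T root B)
    (t t1 t2 : ι)
    (hc1 : IsChildOf T root t1 t) (hc2 : IsChildOf T root t2 t)
    (hB1 : B t = B t1) (hB2 : B t = B t2)
    (S R' : Set V) :
    (HasParams TG (subVerts T root B t1) (B t1) S R' ∅ →
      HasParams TG (subVerts T root B t) (B t) S R' ∅) ∧
    (HasParams TG (subVerts T root B t2) (B t2) S R' ∅ →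
      HasParams TG (subVerts T root B t) (B t) S R' ∅) :=
  ⟨HasParams.of_desc hD hc1.2 hB1, HasParams.of_desc hD hc2.2 hB2⟩

/-- at a join node, a trapping set with parameters `(R', ∅)` in
`G_{t1}` (resp. `G_{t2}`) is a trapping set with parameters `(R', ∅)` in `G_t`. -/
theorem stmt_17 {V ι : Type*} [Fintype V] [Fintype ι]
    (TG : TannerGraph V) (T : SimpleGraph ι) (root : ι) (B : ι → Set V)
    (hD : IsRootedTreeDecomp TG.G T root B)
    (t t1 t2 : ι)
    (hc1 : IsChildOf T root t1 t) (hc2 : IsChildOf T root t2 t) (hne : t1 ≠ t2)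
    (honly : ∀ s, IsChildOf T root s t → s = t1 ∨ s = t2)
    (hB1 : B t = B t1) (hB2 : B t = B t2)
    (S R' : Set V) :
    (HasParams TG (subVerts T root B t1) (B t1) S R' ∅ →
      HasParams TG (subVerts T root B t) (B t) S R' ∅) ∧
    (HasParams TG (subVerts T root B t2) (B t2) S R' ∅ →
      HasParams TG (subVerts T root B t) (B t) S R' ∅) :=
  stmt_17_general TG T root B hD t t1 t2 hc1 hc2 hB1 hB2 S R'
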